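/- arXiv:2601.13321 — 2 statements merged into one kernel-verified Lean document; each statement's English description precedes it below -/
import Mathlib

section
/- Let κ and λ be infinite cardinals with κ regular and κ ≤ λ, let X ⊆ ᵏλ be a subspace of weight at most λ, and let S be a positively totally ordered monoid that is not 0-continuous. Let (X, 𝔐, μ) be a weak λ⁺-measure space with μ taking values in S, and let U ⊆ X be an open set with μ(U) > 0. Then there is x ∈ U such that either {x} ∉ 𝔐 or μ({x}) > 0. -/
/-!
Suppose every point of `U` is measurable and null. If every point of `U` had a null cone around
it, the null cones taken at their least levels would be pairwise disjoint, hence at most `λ` many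
by the weight bound, and (M4) would give `μ U = 0`. So some `x ∈ U` has all its cones of positive
measure, and by (M5) their measures have infimum `μ {x} = 0`.

This forces every `ε > 0` to have some `t > 0` with `t + t < ε`: otherwise take a cone `C` at `x`
with `μ C < ε` and split it into the cones of a higher level. Two pieces of positive measure
would add up to at least `ε`, so all the mass of `C` sits on the piece around `x`, and `μ C` is a
positive lower bound for the measures of the cones at `x`.

Halving rules out a least positive element, so the degree of `S` is infinite, and a greedy
transfinite recursion gives a coinitial strongly decreasing sequence; the recursion gets stuck at
some ordinal, since it would otherwise inject all ordinals into `S`. So `S` is 0-continuous.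
-/

open Cardinal Set

noncomputable section

/-- The type of `ι`-indexed sequences in `A`, as a type synonym carrying the bounded topology. -/
def GSeq (ι A : Type) : Type := ι → A

/-- The bounded topology on `GSeq ι A`: the topology generated by the cones
`N_s = {y | ∀ i < b, y i = x i}`. -/
instance GSeq.topologicalSpace (ι A : Type) [LinearOrder ι] : TopologicalSpace (GSeq ι A) :=
  TopologicalSpace.generateFrom
    {C : Set (GSeq ι A) | ∃ (x : ι → A) (b : ι), C = {y : GSeq ι A | ∀ i, i < b → y i = x i}}

/-- The weight of a topological space: the least cardinality of a basis for its topology. -/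
def tweight (X : Type) [TopologicalSpace X] : Cardinal :=
  ⨅ B : {B : Set (Set X) // TopologicalSpace.IsTopologicalBasis B}, #↥(B.1)

/-- `S` is a positively totally ordered monoid (on top of given `AddMonoid` and `LinearOrder`
structures): the addition is weakly monotone in both arguments, `0` is the least element, and
the positive cone `S⁺ = {a | 0 < a}` is nonempty. -/
structure IsPTOM (S : Type*) [AddMonoid S] [LinearOrder S] : Prop where
  add_le_add : ∀ a b c d : S, a ≤ b → c ≤ d → a + c ≤ b + d
  zero_le : ∀ a : S, 0 ≤ a
  exists_pos : ∃ a : S, 0 < a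

/-- The sum of `f` over a finite set `F` of indices, taken in increasing order of the indices. -/
def finSum {ι : Type*} [LinearOrder ι] {S : Type*} [AddMonoid S] (f : ι → S) (F : Finset ι) : S :=
  ((F.sort (· ≤ ·)).map f).sum

/-- `μ` is a continuous measure: every singleton is measurable and has measure `0`. -/
def MeasureContinuous {X : Type} [TopologicalSpace X] {S : Type*} [Zero S]
    (M : Set (Set X)) (μ : Set X → S) : Prop :=
  ∀ x : X, {x} ∈ M ∧ μ {x} = 0

/-- `(X, M, μ)` is a weak `λ⁺`-measure space (with `lam` playing the role of `λ`):
`M` contains all open sets and is closed under unions of at most `lam` many sets,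
and `μ` satisfies the axioms (M1)-(M5). -/
structure IsWeakMeasureSpace (X : Type) [TopologicalSpace X] (lam : Cardinal)
    (S : Type*) [AddMonoid S] [LinearOrder S] (M : Set (Set X)) (μ : Set X → S) : Prop where
  open_mem : ∀ U : Set X, IsOpen U → U ∈ M
  sUnion_mem : ∀ 𝒜 : Set (Set X), 𝒜 ⊆ M → #↥𝒜 ≤ lam → ⋃₀ 𝒜 ∈ M
  measure_empty : μ ∅ = 0
  measure_univ_pos : 0 < μ Set.univ
  mono : ∀ A B : Set X, A ∈ M → B ∈ M → A ⊆ B → μ A ≤ μ B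
  additive : ∀ (γ : Ordinal) (A : γ.ToType → Set X), γ.card ≤ lam →
    (∀ i, A i ∈ M) → Pairwise (Function.onFun Disjoint A) →
    IsLUB {s : S | ∃ F : Finset γ.ToType, s = finSum (fun i => μ (A i)) F} (μ (⋃ i, A i))
  point_reg : ∀ (x : X) (γ : Ordinal) (A : γ.ToType → Set X),
    {x} ∈ M → γ.card ≤ lam →
    (∀ i, IsOpen (A i) ∧ x ∈ A i) →
    (∀ U : Set X, IsOpen U → x ∈ U → ∃ i, A i ⊆ U) →
    IsGLB (Set.range fun i => μ (A i)) (μ {x})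

/-- The degree of `S`: the least cardinality of a subset of the positive cone `S⁺`
that is coinitial in `S⁺`. -/
def degree (S : Type*) [Zero S] [LinearOrder S] : Cardinal :=
  ⨅ A : {A : Set S // (∀ a ∈ A, 0 < a) ∧ ∀ ε : S, 0 < ε → ∃ a ∈ A, a ≤ ε}, #↥(A.1)

/-- `S` is `0`-continuous: its degree is infinite and `S⁺` contains a coinitial,
strongly decreasing sequence. -/
def ZeroContinuous (S : Type) [AddMonoid S] [LinearOrder S] : Prop :=
  ℵ₀ ≤ degree S ∧ ∃ (δ : Ordinal.{0}) (a : δ.ToType → S),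
    (∀ i, 0 < a i) ∧ (∀ ε : S, 0 < ε → ∃ i, a i ≤ ε) ∧
    ∀ i j : δ.ToType, j < i → a i + a i < a j

namespace IsPTOM

variable {S : Type} [AddMonoid S] [LinearOrder S]

theorem addLeftMono (hS : IsPTOM S) : AddLeftMono S :=
  ⟨fun _ _ _ h => hS.add_le_add _ _ _ _ le_rfl h⟩

theorem addRightMono (hS : IsPTOM S) : AddRightMono S :=
  ⟨fun _ _ _ h => hS.add_le_add _ _ _ _ h le_rfl⟩

theorem le_add_self (hS : IsPTOM S) (a : S) : a ≤ a + a := by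
  simpa using hS.add_le_add a a 0 a le_rfl (hS.zero_le a)

theorem sum_map_le_of_forall_eq_zero_or {α : Type*} (hS : IsPTOM S) (f : α → S) (a₀ : α) :
    ∀ {L : List α}, L.Nodup → (∀ a ∈ L, f a = 0 ∨ a = a₀) → (L.map f).sum ≤ f a₀
  | [], _, _ => hS.zero_le _
  | a :: L, hL, h => by
    obtain ⟨haL, hL⟩ := List.nodup_cons.mp hL
    have hL₀ : ∀ b ∈ L, f b = 0 ∨ b = a₀ := fun b hb => h b (List.mem_cons_of_mem a hb)
    rw [List.map_cons, List.sum_cons]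
    rcases h a List.mem_cons_self with ha | rfl
    · rw [ha, zero_add]
      exact hS.sum_map_le_of_forall_eq_zero_or f a₀ hL hL₀
    · have hzero : ∀ s ∈ L.map f, s = 0 := by
        simp only [List.mem_map, forall_exists_index, and_imp, forall_apply_eq_imp_iff₂]
        exact fun b hb => (hL₀ b hb).resolve_right fun hba => haL (hba ▸ hb)
      rw [List.sum_eq_zero hzero, add_zero]

theorem add_le_finSum {ι : Type*} [LinearOrder ι] (hS : IsPTOM S) (f : ι → S) {F : Finset ι}
    {i j : ι} (hi : i ∈ F) (hj : j ∈ F) (hij : i < j) : f i + f j ≤ finSum f F := by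
  have := hS.addLeftMono
  have := hS.addRightMono
  have hsub : List.Sublist [i, j] (F.sort (· ≤ ·)) := by
    refine List.sublist_of_subperm_of_sortedLE (List.subperm_of_subset (by simp [hij.ne]) ?_)
      (List.sortedLE_iff_pairwise.mpr (by simp [hij.le])) F.sortedLT_sort.sortedLE
    simp [List.subset_def, hi, hj]
  simpa [finSum] using (hsub.map f).sum_le_sum fun s _ => hS.zero_le s

theorem aleph0_le_degree (hS : IsPTOM S) (hhalf : ∀ ε : S, 0 < ε → ∃ t, 0 < t ∧ t + t < ε) :
    ℵ₀ ≤ degree S := by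
  have : Nonempty {A : Set S // (∀ a ∈ A, 0 < a) ∧ ∀ ε : S, 0 < ε → ∃ a ∈ A, a ≤ ε} :=
    ⟨⟨{a | 0 < a}, fun _ ha => ha, fun ε hε => ⟨ε, hε, le_rfl⟩⟩⟩
  refine le_ciInf fun ⟨A, hApos, hAcoinit⟩ => ?_
  by_contra! hfin
  obtain ⟨ε, hε⟩ := hS.exists_pos
  obtain ⟨a, haA, -⟩ := hAcoinit ε hε
  obtain ⟨m, hmA, hmin⟩ :=
    Set.exists_min_image A id (Cardinal.lt_aleph0_iff_set_finite.mp hfin) ⟨a, haA⟩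
  obtain ⟨t, ht, htm⟩ := hhalf m (hApos m hmA)
  obtain ⟨a, haA, hat⟩ := hAcoinit t ht
  exact (hmin a haA).not_gt ((hat.trans (hS.le_add_self t)).trans_lt htm)

theorem exists_strongly_decreasing_coinitial (hS : IsPTOM S)
    (hhalf : ∀ ε : S, 0 < ε → ∃ t, 0 < t ∧ t + t < ε) :
    ∃ (δ : Ordinal.{0}) (a : δ.ToType → S), (∀ i, 0 < a i) ∧ (∀ ε : S, 0 < ε → ∃ i, a i ≤ ε) ∧
      ∀ i j : δ.ToType, j < i → a i + a i < a j := by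
  classical
  obtain ⟨a, ha⟩ : ∃ a : Ordinal.{0} → S, ∀ o, a o =
      if h : ∃ t, 0 < t ∧ ∀ j < o, t + t < a j then h.choose else 0 :=
    ⟨wellFounded_lt.fix fun o rec =>
      if h : ∃ t, 0 < t ∧ ∀ j (hj : j < o), t + t < rec j hj then h.choose else 0,
      fun o => WellFounded.fix_eq _ _ o⟩
  set Stuck := {o | ¬ ∃ t, 0 < t ∧ ∀ j < o, t + t < a j}
  have hgood : ∀ o ∉ Stuck, 0 < a o ∧ ∀ j < o, a o + a o < a j := fun o ho => by
    rw [ha, dif_pos (not_not.mp ho)]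
    exact (not_not.mp ho).choose_spec
  have hstuck : Stuck.Nonempty := by
    by_contra! hnone
    refine not_injective_of_ordinal a (StrictAnti.injective fun j o hjo => ?_)
    have ho := hgood o (hnone ▸ Set.notMem_empty o)
    exact (hS.le_add_self _).trans_lt (ho.2 j hjo)
  set δ := sInf Stuck
  have hδ : δ ∈ Stuck := csInf_mem hstuck
  have hbelow : ∀ i : δ.ToType, (Ordinal.ToType.mk.symm i : Ordinal) ∉ Stuck :=
    fun i => notMem_of_lt_csInf' (Ordinal.ToType.mk.symm i).2
  refine ⟨δ, fun i => a (Ordinal.ToType.mk.symm i), fun i => (hgood _ (hbelow i)).1,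
    fun ε hε => ?_, fun i j hji => (hgood _ (hbelow i)).2 _ ?_⟩
  · obtain ⟨t, ht, htε⟩ := hhalf ε hε
    obtain ⟨j, hj, hjt⟩ : ∃ j < δ, a j ≤ t + t := by
      by_contra! h
      exact hδ ⟨t, ht, h⟩
    exact ⟨Ordinal.ToType.mk ⟨j, hj⟩, by simpa using (hjt.trans_lt htε).le⟩
  · exact Subtype.coe_lt_coe.mpr (Ordinal.ToType.mk.symm.lt_iff_lt.mpr hji)

theorem zeroContinuous_of_forall_exists_add_self_lt (hS : IsPTOM S)
    (hhalf : ∀ ε : S, 0 < ε → ∃ t, 0 < t ∧ t + t < ε) : ZeroContinuous S :=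
  ⟨hS.aleph0_le_degree hhalf, hS.exists_strongly_decreasing_coinitial hhalf⟩

end IsPTOM

section

open TopologicalSpace

theorem exists_isTopologicalBasis_mk_eq_tweight (Y : Type) [TopologicalSpace Y] :
    ∃ B : Set (Set Y), IsTopologicalBasis B ∧ #B = tweight Y := by
  have : Nonempty {B : Set (Set Y) // IsTopologicalBasis B} :=
    ⟨⟨{U | IsOpen U}, isTopologicalBasis_opens⟩⟩
  obtain ⟨⟨B, hB⟩, hBw⟩ := ciInf_mem fun B : {B : Set (Set Y) // IsTopologicalBasis B} => #B.1
  exact ⟨B, hB, hBw⟩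

theorem mk_le_of_pairwise_disjoint_isOpen {Y : Type} [TopologicalSpace Y] {lam : Cardinal}
    (hw : tweight Y ≤ lam) {𝒟 : Set (Set Y)}
    (hopen : ∀ D ∈ 𝒟, IsOpen D) (hne : ∀ D ∈ 𝒟, D.Nonempty) (hdisj : 𝒟.Pairwise Disjoint) :
    #𝒟 ≤ lam := by
  obtain ⟨B, hB, hBw⟩ := exists_isTopologicalBasis_mk_eq_tweight Y
  have hbasic : ∀ D : 𝒟, ∃ V : B, (V : Set Y).Nonempty ∧ (V : Set Y) ⊆ D := by
    rintro ⟨D, hD⟩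
    obtain ⟨y, hy⟩ := hne D hD
    obtain ⟨V, hVB, hyV, hVD⟩ := hB.exists_subset_of_mem_open hy (hopen D hD)
    exact ⟨⟨V, hVB⟩, ⟨y, hyV⟩, hVD⟩
  choose V hVne hVsub using hbasic
  have hinj : Function.Injective V := by
    intro D₁ D₂ hV
    obtain ⟨y, hy⟩ := hVne D₁
    by_contra hD
    exact Set.disjoint_left.mp (hdisj D₁.2 D₂.2 (Subtype.coe_ne_coe.mpr hD)) (hVsub D₁ hy)
      (hVsub D₂ (hV ▸ hy))
  exact (Cardinal.mk_le_of_injective hinj).trans (hBw ▸ hw)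

end

namespace IsWeakMeasureSpace

variable {Y : Type} [TopologicalSpace Y] {lam : Cardinal} {S : Type} [AddMonoid S] [LinearOrder S]
  {M : Set (Set Y)} {μ : Set Y → S} {𝒟 : Set (Set Y)}

theorem sUnion_mem_of_pairwise_disjoint (hμ : IsWeakMeasureSpace Y lam S M μ)
    (hw : tweight Y ≤ lam) (hopen : ∀ D ∈ 𝒟, IsOpen D) (hne : ∀ D ∈ 𝒟, D.Nonempty)
    (hdisj : 𝒟.Pairwise Disjoint) : ⋃₀ 𝒟 ∈ M :=
  hμ.sUnion_mem 𝒟 (fun D hD => hμ.open_mem D (hopen D hD))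
    (mk_le_of_pairwise_disjoint_isOpen hw hopen hne hdisj)

theorem exists_enum_isLUB_finSum (hμ : IsWeakMeasureSpace Y lam S M μ)
    (hw : tweight Y ≤ lam) (hopen : ∀ D ∈ 𝒟, IsOpen D) (hne : ∀ D ∈ 𝒟, D.Nonempty)
    (hdisj : 𝒟.Pairwise Disjoint) :
    ∃ (γ : Ordinal.{0}) (e : γ.ToType → Set Y), Function.Injective e ∧ Set.range e = 𝒟 ∧
      IsLUB {s : S | ∃ F : Finset γ.ToType, s = finSum (fun i => μ (e i)) F} (μ (⋃₀ 𝒟)) := by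
  have h𝒟 := mk_le_of_pairwise_disjoint_isOpen hw hopen hne hdisj
  obtain ⟨e⟩ : Nonempty ((#𝒟).ord.ToType ≃ 𝒟) := by
    rw [← Cardinal.eq, Cardinal.mk_toType, Cardinal.card_ord]
  have he : Function.Injective fun i => (e i : Set Y) := Subtype.val_injective.comp e.injective
  have hrange : Set.range (fun i => (e i : Set Y)) = 𝒟 :=
    Set.ext fun D => ⟨by rintro ⟨i, rfl⟩; exact (e i).2, fun hD => ⟨e.symm ⟨D, hD⟩, by simp⟩⟩
  refine ⟨(#𝒟).ord, _, he, hrange, ?_⟩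
  rw [(congrArg Set.sUnion hrange).symm.trans (Set.sUnion_range _)]
  exact hμ.additive _ _ (by rwa [Cardinal.card_ord]) (fun i => hμ.open_mem _ (hopen _ (e i).2))
    fun i j hij => hdisj (e i).2 (e j).2 (he.ne hij)

theorem measure_sUnion_le_of_forall_eq_zero_or (hμ : IsWeakMeasureSpace Y lam S M μ)
    (hS : IsPTOM S) (hw : tweight Y ≤ lam) (hopen : ∀ D ∈ 𝒟, IsOpen D)
    (hne : ∀ D ∈ 𝒟, D.Nonempty) (hdisj : 𝒟.Pairwise Disjoint) {D₀ : Set Y}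
    (hnull : ∀ D ∈ 𝒟, μ D = 0 ∨ D = D₀) : μ (⋃₀ 𝒟) ≤ μ D₀ := by
  obtain ⟨γ, e, he, hrange, hlub⟩ := hμ.exists_enum_isLUB_finSum hw hopen hne hdisj
  refine hlub.2 ?_
  rintro _ ⟨F, rfl⟩
  rw [finSum, show (fun i => μ (e i)) = μ ∘ e from rfl, ← List.map_map]
  refine hS.sum_map_le_of_forall_eq_zero_or μ D₀ ((F.sort_nodup _).map he) fun D hD => ?_
  obtain ⟨i, -, rfl⟩ := List.mem_map.mp hD
  exact hnull _ (hrange ▸ Set.mem_range_self i)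

theorem min_add_min_le_measure_sUnion (hμ : IsWeakMeasureSpace Y lam S M μ)
    (hS : IsPTOM S) (hw : tweight Y ≤ lam) (hopen : ∀ D ∈ 𝒟, IsOpen D)
    (hne : ∀ D ∈ 𝒟, D.Nonempty) (hdisj : 𝒟.Pairwise Disjoint) {D₁ D₂ : Set Y}
    (hD₁ : D₁ ∈ 𝒟) (hD₂ : D₂ ∈ 𝒟) (hD : D₁ ≠ D₂) :
    min (μ D₁) (μ D₂) + min (μ D₁) (μ D₂) ≤ μ (⋃₀ 𝒟) := by
  obtain ⟨γ, e, he, hrange, hlub⟩ := hμ.exists_enum_isLUB_finSum hw hopen hne hdisj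
  obtain ⟨i, rfl⟩ : D₁ ∈ Set.range e := hrange ▸ hD₁
  obtain ⟨j, rfl⟩ : D₂ ∈ Set.range e := hrange ▸ hD₂
  have hpair : ∀ {i j}, i < j → μ (e i) + μ (e j) ≤ μ (⋃₀ 𝒟) := fun hij =>
    (hS.add_le_finSum _ (Finset.mem_insert_self _ _) (Finset.mem_insert_of_mem
      (Finset.mem_singleton_self _)) hij).trans (hlub.1 ⟨_, rfl⟩)
  rcases lt_or_gt_of_ne (fun hij => hD (congrArg e hij)) with hij | hij
  · exact (hS.add_le_add _ _ _ _ (min_le_left _ _) (min_le_right _ _)).trans (hpair hij)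
  · exact (hS.add_le_add _ _ _ _ (min_le_right _ _) (min_le_left _ _)).trans (hpair hij)

end IsWeakMeasureSpace

namespace GSeq

variable {ι A : Type} [LinearOrder ι] {X : Set (GSeq ι A)}

def cone (x : X) (b : ι) : Set X := {y | ∀ i < b, (y : GSeq ι A) i = (x : GSeq ι A) i}

theorem isOpen_cone (x : X) (b : ι) : IsOpen (cone x b) :=
  isOpen_induced_iff.mpr ⟨_, TopologicalSpace.isOpen_generateFrom_of_mem ⟨x.1, b, rfl⟩, rfl⟩

theorem mem_cone_self (x : X) (b : ι) : x ∈ cone x b := fun _ _ => rfl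

theorem cone_anti (x : X) : Antitone (cone x) :=
  fun _ _ hb _ hy i hi => hy i (hi.trans_le hb)

theorem cone_eq_of_mem {x y : X} {b : ι} (h : y ∈ cone x b) : cone y b = cone x b :=
  Set.ext fun _ =>
    ⟨fun hz i hi => (hz i hi).trans (h i hi), fun hz i hi => (hz i hi).trans (h i hi).symm⟩

theorem cone_eq_of_mem_of_le {x y z : X} {b b' : ι} (hx : z ∈ cone x b) (hy : z ∈ cone y b')
    (hb : b ≤ b') : cone y b = cone x b :=
  (cone_eq_of_mem (cone_anti y hb hy)).symm.trans (cone_eq_of_mem hx)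

theorem pairwise_disjoint_image_cone (T : Set X) (b : ι) :
    ((fun z => cone z b) '' T).Pairwise Disjoint := by
  rintro _ ⟨z₁, -, rfl⟩ _ ⟨z₂, -, rfl⟩ hne
  exact Set.disjoint_left.mpr fun y hy₁ hy₂ =>
    hne ((cone_eq_of_mem hy₁).symm.trans (cone_eq_of_mem hy₂))

theorem sUnion_image_cone_of_le (x : X) {b b' : ι} (hb : b ≤ b') :
    ⋃₀ ((fun z => cone z b') '' cone x b) = cone x b := by
  refine Set.Subset.antisymm ?_ fun y hy => ⟨cone y b', ⟨y, hy, rfl⟩, mem_cone_self y b'⟩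
  rintro y ⟨_, ⟨z, hz, rfl⟩, hy⟩
  exact cone_eq_of_mem hz ▸ cone_anti z hb hy

theorem exists_cone_subset_of_isOpen [Nonempty ι] {V : Set (GSeq ι A)}
    (hV : IsOpen V) {x : GSeq ι A} (hx : x ∈ V) : ∃ b, {y : GSeq ι A | ∀ i < b, y i = x i} ⊆ V := by
  induction hV with
  | basic _ hs =>
    obtain ⟨_, b, rfl⟩ := hs
    exact ⟨b, fun y hy i hi => (hy i hi).trans (hx i hi)⟩
  | univ => exact ⟨Classical.arbitrary ι, Set.subset_univ _⟩
  | inter _ _ _ _ ih₁ ih₂ =>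
    obtain ⟨b₁, hb₁⟩ := ih₁ hx.1
    obtain ⟨b₂, hb₂⟩ := ih₂ hx.2
    exact ⟨max b₁ b₂, fun y hy => ⟨hb₁ fun i hi => hy i (hi.trans_le (le_max_left _ _)),
      hb₂ fun i hi => hy i (hi.trans_le (le_max_right _ _))⟩⟩
  | sUnion _ _ ih =>
    obtain ⟨s, hs, hxs⟩ := hx
    obtain ⟨b, hb⟩ := ih s hs hxs
    exact ⟨b, fun y hy => ⟨s, hs, hb hy⟩⟩

theorem exists_cone_subset [Nonempty ι] {x : X} {V : Set X} (hV : IsOpen V) (hx : x ∈ V) :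
    ∃ b, cone x b ⊆ V := by
  obtain ⟨W, hW, rfl⟩ := isOpen_induced_iff.mp hV
  obtain ⟨b, hb⟩ := exists_cone_subset_of_isOpen hW hx
  exact ⟨b, fun y hy => hb hy⟩

end GSeq

namespace IsWeakMeasureSpace

open GSeq

variable {ι A : Type} [LinearOrder ι] {X : Set (GSeq ι A)} {lam : Cardinal} {S : Type}
  [AddMonoid S] [LinearOrder S] {M : Set (Set X)} {μ : Set X → S}

theorem measure_eq_zero_of_forall_exists_cone [WellFoundedLT ι] [Nonempty ι]
    (hμ : IsWeakMeasureSpace X lam S M μ) (hS : IsPTOM S) (hw : tweight X ≤ lam) {U : Set X}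
    (hU : IsOpen U) (h0 : ∀ x ∈ U, ∃ b, μ (cone x b) = 0) : μ U = 0 := by
  have hleast : ∀ x ∈ U, ∃ b, μ (cone x b) = 0 ∧ ∀ b', μ (cone x b') = 0 → b ≤ b' := by
    intro x hx
    obtain ⟨b, hb, hmin⟩ := wellFounded_lt.has_min {b | μ (cone x b) = 0} (h0 x hx)
    exact ⟨b, hb, fun b' hb' => not_lt.mp (hmin b' hb')⟩
  choose! β hβ hβmin using hleast
  set 𝒟 := (fun x => cone x (β x)) '' U
  have hopen : ∀ D ∈ 𝒟, IsOpen D := by rintro _ ⟨x, -, rfl⟩; exact isOpen_cone x _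
  have hne : ∀ D ∈ 𝒟, D.Nonempty := by rintro _ ⟨x, -, rfl⟩; exact ⟨x, mem_cone_self x _⟩
  have hdisj : 𝒟.Pairwise Disjoint := by
    suffices key : ∀ x ∈ U, ∀ y ∈ U, β x ≤ β y → ∀ z ∈ cone x (β x), z ∈ cone y (β y) →
        cone x (β x) = cone y (β y) by
      rintro _ ⟨x, hx, rfl⟩ _ ⟨y, hy, rfl⟩ hxy
      refine Set.disjoint_left.mpr fun z hzx hzy => hxy ?_
      rcases le_total (β x) (β y) with h | h
      · exact key x hx y hy h z hzx hzy
      · exact (key y hy x hx h z hzy hzx).symm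
    intro x hx y hy hle z hzx hzy
    have hyx : cone y (β x) = cone x (β x) := cone_eq_of_mem_of_le hzx hzy hle
    rw [← le_antisymm hle (hβmin y hy _ (hyx ▸ hβ x hx))]
    exact hyx.symm
  refine le_antisymm ?_ (hS.zero_le _)
  calc μ U ≤ μ (⋃₀ 𝒟) :=
        hμ.mono _ _ (hμ.open_mem U hU) (hμ.sUnion_mem_of_pairwise_disjoint hw hopen hne hdisj)
          fun x hx => ⟨_, ⟨x, hx, rfl⟩, mem_cone_self x _⟩
    _ ≤ μ ∅ := hμ.measure_sUnion_le_of_forall_eq_zero_or hS hw hopen hne hdisj <| by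
        rintro _ ⟨x, hx, rfl⟩
        exact Or.inl (hβ x hx)
    _ = 0 := hμ.measure_empty

theorem exists_forall_measure_cone_pos [WellFoundedLT ι] [Nonempty ι]
    (hμ : IsWeakMeasureSpace X lam S M μ) (hS : IsPTOM S) (hw : tweight X ≤ lam) {U : Set X}
    (hU : IsOpen U) (hUpos : 0 < μ U) : ∃ x ∈ U, ∀ b, 0 < μ (cone x b) := by
  by_contra! h
  exact hUpos.ne' <| hμ.measure_eq_zero_of_forall_exists_cone hS hw hU fun x hx =>
    (h x hx).imp fun _ hb => le_antisymm hb (hS.zero_le _)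

theorem exists_pos_add_self_lt (hμ : IsWeakMeasureSpace X lam S M μ) (hS : IsPTOM S)
    (hw : tweight X ≤ lam) {x : X} (hpos : ∀ b, 0 < μ (cone x b))
    (hglb : IsGLB (Set.range fun b => μ (cone x b)) 0) {ε : S} (hε : 0 < ε) :
    ∃ t, 0 < t ∧ t + t < ε := by
  by_contra! hge
  obtain ⟨_, ⟨b₀, rfl⟩, -, hb₀⟩ := hglb.exists_between hε
  have hle : ∀ b, μ (cone x b₀) ≤ μ (cone x b) := by
    intro b
    have hb' : b₀ ≤ max b₀ b := le_max_left b₀ b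
    set 𝒟 := (fun z => cone z (max b₀ b)) '' cone x b₀
    have hopen : ∀ D ∈ 𝒟, IsOpen D := by rintro _ ⟨z, -, rfl⟩; exact isOpen_cone z _
    have hne : ∀ D ∈ 𝒟, D.Nonempty := by rintro _ ⟨z, -, rfl⟩; exact ⟨z, mem_cone_self z _⟩
    have hdisj := pairwise_disjoint_image_cone (cone x b₀) (max b₀ b)
    have hnull : ∀ D ∈ 𝒟, μ D = 0 ∨ D = cone x (max b₀ b) := by
      intro D hD
      by_contra! hD'
      have hsum := hμ.min_add_min_le_measure_sUnion hS hw hopen hne hdisj hD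
        ⟨x, mem_cone_self x b₀, rfl⟩ hD'.2
      rw [sUnion_image_cone_of_le x hb'] at hsum
      exact (hge _ (lt_min ((hS.zero_le _).lt_of_ne hD'.1.symm) (hpos _))).not_gt
        (hsum.trans_lt hb₀)
    calc μ (cone x b₀) = μ (⋃₀ 𝒟) := by rw [sUnion_image_cone_of_le x hb']
      _ ≤ μ (cone x (max b₀ b)) :=
        hμ.measure_sUnion_le_of_forall_eq_zero_or hS hw hopen hne hdisj hnull
      _ ≤ μ (cone x b) := hμ.mono _ _ (hμ.open_mem _ (isOpen_cone x _))
        (hμ.open_mem _ (isOpen_cone x _)) (cone_anti x (le_max_right b₀ b))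
  exact (hpos b₀).not_ge (hglb.2 (Set.forall_mem_range.mpr hle))

end IsWeakMeasureSpace

theorem statement_6_general (κ lam : Cardinal) (hκ : κ.IsRegular) (hκlam : κ ≤ lam)
    (X : Set (GSeq κ.ord.ToType lam.ord.ToType)) (hw : tweight ↥X ≤ lam)
    (S : Type) [AddMonoid S] [LinearOrder S] (hS : IsPTOM S)
    (hnzc : ¬ ZeroContinuous S)
    (M : Set (Set ↥X)) (μ : Set ↥X → S)
    (hμ : IsWeakMeasureSpace ↥X lam S M μ)
    (U : Set ↥X) (hU : IsOpen U) (hUpos : 0 < μ U) :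
    ∃ x ∈ U, ({x} : Set ↥X) ∉ M ∨ 0 < μ {x} := by
  by_contra! hnull
  have : Nonempty κ.ord.ToType := Ordinal.nonempty_toType_iff.mpr hκ.ord_pos.ne'
  obtain ⟨x, hxU, hpos⟩ := hμ.exists_forall_measure_cone_pos hS hw hU hUpos
  have hglb : IsGLB (Set.range fun b => μ (GSeq.cone x b)) 0 := by
    have := hμ.point_reg x κ.ord (GSeq.cone x) (hnull x hxU).1 (by rwa [Cardinal.card_ord])
      (fun b => ⟨GSeq.isOpen_cone x b, GSeq.mem_cone_self x b⟩)
      fun V hV hxV => GSeq.exists_cone_subset hV hxV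
    rwa [le_antisymm (hnull x hxU).2 (hS.zero_le _)] at this
  exact hnzc <| hS.zeroContinuous_of_forall_exists_add_self_lt fun ε hε =>
    hμ.exists_pos_add_self_lt hS hw hpos hglb hε

/-- if `S` is not `0`-continuous and `(X, 𝔐, μ)` is a weak `λ⁺`-measure space on
some `X ⊆ ᵏλ` of weight at most `λ`, then every open `U` of positive measure contains a point
that is either non-measurable or of positive measure. -/
theorem statement_6 (κ lam : Cardinal) (hκ : κ.IsRegular) (hκlam : κ ≤ lam) (hlam : ℵ₀ ≤ lam)
    (X : Set (GSeq κ.ord.ToType lam.ord.ToType)) (hw : tweight ↥X ≤ lam)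
    (S : Type) [AddMonoid S] [LinearOrder S] (hS : IsPTOM S)
    (hnzc : ¬ ZeroContinuous S)
    (M : Set (Set ↥X)) (μ : Set ↥X → S)
    (hμ : IsWeakMeasureSpace ↥X lam S M μ)
    (U : Set ↥X) (hU : IsOpen U) (hUpos : 0 < μ U) :
    ∃ x ∈ U, ({x} : Set ↥X) ∉ M ∨ 0 < μ {x} :=
  statement_6_general κ lam hκ hκlam X hw S hS hnzc M μ hμ U hU hUpos

end
end

section
/- Let κ and λ be infinite cardinals with κ regular and κ ≤ λ, and set λ' = λ^{<κ}. Then (λ')^{<κ} = λ', and the space ᵏλ with the bounded topology is homeomorphic to the space ᵏλ' with the bounded topology. -/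
/-!
Write `λ' = λ^{<κ}`. For `c < κ`, regularity of `κ` puts the range of any map `c → λ'` below a
single `λ^d` with `d < κ`, so `λ'^c ≤ κ · λ^{<κ} = λ'`.

For the homeomorphism, let `len : λ → κ` be onto; then `λ' = Σ_{a < λ} λ^{len a}`, so an element
of `λ'` is a block of elements of `λ` whose first entry `a` determines its length `1 + len a`.
A `κ`-sequence of such blocks is written out as a single `κ`-sequence in `λ` by laying the blocks
end to end, and conversely every `κ`-sequence in `λ` is parsed into blocks, reading each head to
find where the next block starts. Regularity of `κ` keeps all block boundaries below `κ`, and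
each initial segment of the output of either map only depends on an initial segment of its
input, so both maps are continuous.
-/

open Cardinal Set

noncomputable section

open Ordinal

universe u

namespace Ordinal.ToType

variable {o : Ordinal.{u}}

theorem coe_lt (t : o.ToType) : (t : Ordinal) < o := t.toOrd.2

theorem coe_injective : Function.Injective fun t : o.ToType => (t : Ordinal) :=
  fun _ _ h => ToType.mk.symm.injective (Subtype.ext h)

theorem coe_lt_coe {s t : o.ToType} : (s : Ordinal) < t ↔ s < t := by simp

theorem coe_le_of_strictMono {f : o.ToType → Ordinal} (hf : StrictMono f) (t : o.ToType) :
    (t : Ordinal) ≤ f t := by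
  induction t using WellFoundedLT.induction with
  | ind t ih =>
    refine le_of_forall_lt fun v hv => ?_
    have hvo : v < o := hv.trans (coe_lt t)
    have hlt : ToType.mk ⟨v, hvo⟩ < t := by simpa [← coe_lt_coe] using hv
    calc v = (ToType.mk ⟨v, hvo⟩ : o.ToType) := by simp
      _ ≤ f (ToType.mk ⟨v, hvo⟩) := ih _ hlt
      _ < f t := hf hlt

theorem mk_setOf_card_coe_lt_le (μ : Cardinal.{u}) :
    #{t : o.ToType | (t : Ordinal).card < μ} ≤ μ := by
  have hinj : Function.Injective fun t : {t : o.ToType | (t : Ordinal).card < μ} =>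
      (ToType.mk ⟨(t.1 : Ordinal), lt_ord.2 t.2⟩ : μ.ord.ToType) := fun s t h =>
    Subtype.ext (coe_injective (by simpa using congrArg (fun u : μ.ord.ToType => (u : Ordinal)) h))
  simpa using mk_le_of_injective hinj

variable [Nonempty o.ToType]

/-- Junk for `o ≤ v`. -/
def ofOrd (v : Ordinal) : o.ToType :=
  if h : v < o then ToType.mk ⟨v, h⟩ else Classical.arbitrary _

@[simp]
theorem coe_ofOrd {v : Ordinal} (h : v < o) : ((ofOrd v : o.ToType) : Ordinal) = v := by
  simp [ofOrd, h]

@[simp]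
theorem ofOrd_coe (t : o.ToType) : ofOrd (t : Ordinal) = t :=
  coe_injective (coe_ofOrd (coe_lt t))

theorem ofOrd_lt_ofOrd {v w : Ordinal} (hv : v < o) (hw : w < o) :
    (ofOrd v : o.ToType) < ofOrd w ↔ v < w := by
  rw [← coe_lt_coe, coe_ofOrd hv, coe_ofOrd hw]

end Ordinal.ToType

namespace Cardinal

theorem self_le_powerlt {a b : Cardinal} (hb : 1 < b) : a ≤ a ^< b := by
  simpa using le_powerlt a hb

theorem exists_lt_pow_of_lt_powerlt {a b c : Cardinal} (h : c < a ^< b) : ∃ d < b, c < a ^ d := by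
  by_contra! H
  exact (powerlt_le.2 H).not_gt h

theorem powerlt_pow_le {κ lam c : Cardinal.{u}} (hκ : κ.IsRegular) (hκlam : κ ≤ lam)
    (hc : c < κ) : (lam ^< κ) ^ c ≤ lam ^< κ := by
  have hlam : lam ≠ 0 := (hκ.pos.trans_le hκlam).ne'
  have hκ' : κ ≤ lam ^< κ := hκlam.trans (self_le_powerlt (one_lt_aleph0.trans_le hκ.aleph0_le))
  choose d hdκ hd using fun x : (lam ^< κ).ord.ToType =>
    exists_lt_pow_of_lt_powerlt (lt_ord.1 (ToType.coe_lt x))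
  let S (t : κ.ord.ToType) :=
    {x : (lam ^< κ).ord.ToType | (x : Ordinal).card < lam ^ (t : Ordinal).card}
  have hsurj : Function.Surjective fun (p : Σ t, c.ord.ToType → S t) i =>
      (p.2 i : (lam ^< κ).ord.ToType) := by
    intro g
    have hD : ⨆ i, d (g i) < κ :=
      iSup_lt_of_lt_cof_ord (by simpa [hκ.cof_ord] using hc) fun i => hdκ _
    refine ⟨⟨ToType.mk ⟨_, ord_lt_ord.2 hD⟩, fun i => ⟨g i, ?_⟩⟩, rfl⟩
    simpa [S] using (hd _).trans_le (power_le_power_left hlam (le_ciSup bddAbove_of_small i))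
  calc (lam ^< κ) ^ c = #(c.ord.ToType → (lam ^< κ).ord.ToType) := by simp
    _ ≤ #(Σ t, c.ord.ToType → S t) := mk_le_of_surjective hsurj
    _ = sum fun t => #(S t) ^ c := by simp
    _ ≤ sum fun _ : κ.ord.ToType => lam ^< κ := sum_le_sum _ _ fun t => by
        calc #(S t) ^ c ≤ (lam ^ (t : Ordinal).card) ^ c :=
              power_le_power_right (ToType.mk_setOf_card_coe_lt_le _)
          _ = lam ^ ((t : Ordinal).card * c) := by rw [power_mul]
          _ ≤ lam ^< κ :=
              le_powerlt _ (mul_lt_of_lt hκ.aleph0_le (lt_ord.1 (ToType.coe_lt t)) hc)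
    _ = lam ^< κ := by
        rw [sum_const', mk_ord_toType, mul_eq_right (hκ.aleph0_le.trans hκ') hκ' hκ.pos.ne']

theorem powerlt_powerlt {κ lam : Cardinal.{u}} (hκ : κ.IsRegular) (hκlam : κ ≤ lam) :
    (lam ^< κ) ^< κ = lam ^< κ :=
  le_antisymm (powerlt_le.2 fun _ hc => powerlt_pow_le hκ hκlam hc)
    (self_le_powerlt (one_lt_aleph0.trans_le hκ.aleph0_le))

theorem exists_equiv_sigma_toType {κ lam : Cardinal.{u}} (hκ : κ.IsRegular) (hκlam : κ ≤ lam) :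
    ∃ len : lam.ord.ToType → Ordinal.{u}, (∀ a, len a < κ.ord) ∧
      Nonempty ((lam ^< κ).ord.ToType ≃
        Σ a : lam.ord.ToType, ((len a).ToType → lam.ord.ToType)) := by
  have : Nonempty κ.ord.ToType := by simpa using hκ.pos.ne'
  obtain ⟨f⟩ : Nonempty (κ.ord.ToType ↪ lam.ord.ToType) := by
    rwa [← le_def, mk_ord_toType, mk_ord_toType]
  set q := Function.invFun f
  have hq : Function.Surjective q := Function.invFun_surjective f.injective
  refine ⟨fun a => q a, fun a => ToType.coe_lt _, Cardinal.eq.1 ?_⟩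
  have hlam : lam ≤ lam ^< κ := self_le_powerlt (one_lt_aleph0.trans_le hκ.aleph0_le)
  rw [mk_sigma, mk_ord_toType]
  simp only [← power_def, mk_toType, card_ord]
  refine le_antisymm (powerlt_le.2 fun c hc => ?_) ?_
  · obtain ⟨a, ha⟩ := hq (ToType.mk ⟨c.ord, ord_lt_ord.2 hc⟩)
    simpa [ha] using le_sum (fun a => lam ^ (q a : Ordinal).card) a
  · calc sum (fun a => lam ^ (q a : Ordinal).card)
        ≤ #lam.ord.ToType * ⨆ a, lam ^ (q a : Ordinal).card := sum_le_mk_mul_iSup _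
      _ ≤ lam * lam ^< κ := by
        rw [mk_ord_toType]
        gcongr
        exact ciSup_le' fun a => le_powerlt _ (lt_ord.1 (ToType.coe_lt _))
      _ = lam ^< κ :=
        mul_eq_right (hκ.aleph0_le.trans (hκlam.trans hlam)) hlam (hκ.pos.trans_le hκlam).ne'

end Cardinal

namespace GSeq

variable {ι A B : Type} [LinearOrder ι]

theorem isOpen_cone_s13 (x : ι → A) (b : ι) : IsOpen {y : GSeq ι A | ∀ i < b, y i = x i} :=
  TopologicalSpace.isOpen_generateFrom_of_mem ⟨x, b, rfl⟩

theorem continuous_of_forall_exists_eqOn (f : GSeq ι A → GSeq ι B)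
    (hf : ∀ x b, ∃ b', ∀ x', (∀ i < b', x' i = x i) → ∀ i < b, f x' i = f x i) :
    Continuous f := by
  choose b' hb' using hf
  refine continuous_generateFrom_iff.mpr ?_
  rintro _ ⟨z, b, rfl⟩
  have : f ⁻¹' {y | ∀ i < b, y i = z i} =
      ⋃ x ∈ {x | ∀ i < b, f x i = z i}, {x' : GSeq ι A | ∀ i < b' x b, x' i = x i} := by
    ext x'
    simp only [mem_preimage, mem_iUnion]
    refine ⟨fun hx' => ⟨x', hx', fun _ _ => rfl⟩, ?_⟩
    rintro ⟨x, hx, hxx'⟩ i hi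
    rw [hb' x b x' hxx' i hi, hx i hi]
  rw [this]
  exact isOpen_biUnion fun x _ => isOpen_cone_s13 _ _

def homeomorphOfEquiv (F : GSeq ι A ≃ GSeq ι B)
    (hF : ∀ x b, ∃ b', ∀ x', (∀ i < b', x' i = x i) → ∀ i < b, F x' i = F x i)
    (hF' : ∀ y b, ∃ b', ∀ y', (∀ i < b', y' i = y i) → ∀ i < b, F.symm y' i = F.symm y i) :
    GSeq ι A ≃ₜ GSeq ι B where
  toEquiv := F
  continuous_toFun := continuous_of_forall_exists_eqOn F hF
  continuous_invFun := continuous_of_forall_exists_eqOn F.symm hF'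

end GSeq

section BlockStart

variable {ι : Type u} [LinearOrder ι] [WellFoundedLT ι]

/-- Given the end `g j v` of block `j` when it starts at `v`, the blocks `j < i` are laid out
consecutively, and `blockStart g i` is where block `i` starts. -/
def blockStart (g : ι → Ordinal.{u} → Ordinal.{u}) : ι → Ordinal :=
  WellFoundedLT.fix fun i rec => ⨆ j : Iio i, g j (rec j j.2)

variable (g : ι → Ordinal.{u} → Ordinal.{u})

theorem blockStart_eq (i : ι) : blockStart g i = ⨆ j : Iio i, g j (blockStart g j) := by
  rw [blockStart, WellFoundedLT.fix_eq]

theorem le_blockStart {j i : ι} (h : j < i) : g j (blockStart g j) ≤ blockStart g i :=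
  (blockStart_eq g i).symm ▸ le_ciSup Ordinal.bddAbove_of_small (⟨j, h⟩ : Iio i)

theorem blockStart_le_iff {i : ι} {v : Ordinal} :
    blockStart g i ≤ v ↔ ∀ j < i, g j (blockStart g j) ≤ v := by
  rw [blockStart_eq, Ordinal.iSup_le_iff]
  simp

theorem blockStart_lt_ord {κ : Cardinal.{u}} (hκ : κ.IsRegular) (hι : ∀ i : ι, #(Iio i) < κ)
    (hgκ : ∀ j, ∀ v < κ.ord, g j v < κ.ord) (i : ι) : blockStart g i < κ.ord := by
  induction i using WellFoundedLT.induction with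
  | ind i ih =>
    rw [blockStart_eq]
    exact Ordinal.iSup_lt_of_lt_cof (hκ.cof_ord.symm ▸ hι i) fun j => hgκ _ _ (ih j j.2)

variable {g}

theorem blockStart_congr {g' : ι → Ordinal.{u} → Ordinal.{u}} {b : ι}
    (h : ∀ j < b, g j (blockStart g j) = g' j (blockStart g j)) {i : ι} (hi : i ≤ b) :
    blockStart g i = blockStart g' i := by
  induction i using WellFoundedLT.induction with
  | ind i ih =>
    rw [blockStart_eq, blockStart_eq]
    refine iSup_congr fun ⟨j, hj⟩ => ?_
    have hjb : j < b := hj.trans_le hi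
    rw [← ih j hj hjb.le, h j hjb]

variable (hg : ∀ j v, v < g j v)
include hg

theorem blockStart_strictMono : StrictMono (blockStart g) :=
  fun _ _ h => (hg _ _).trans_le (le_blockStart g h)

/-- The block containing position `ξ`; junk if there is none. -/
def blockIndex [Nonempty ι] (g : ι → Ordinal.{u} → Ordinal.{u}) (ξ : Ordinal.{u}) : ι :=
  open scoped Classical in
  if h : {i | ξ < g i (blockStart g i)}.Nonempty then WellFounded.min wellFounded_lt _ h
  else Classical.arbitrary ι

omit hg in
theorem blockIndex_spec [Nonempty ι] {ξ : Ordinal.{u}}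
    (h : {i | ξ < g i (blockStart g i)}.Nonempty) :
    blockStart g (blockIndex g ξ) ≤ ξ ∧
      ξ < g (blockIndex g ξ) (blockStart g (blockIndex g ξ)) := by
  have hmem := wellFounded_lt.min_mem _ h
  rw [blockIndex, dif_pos h]
  refine ⟨(blockStart_le_iff g).2 fun j hj => ?_, hmem⟩
  exact not_lt.1 fun hξ => wellFounded_lt.not_lt_min {i | ξ < g i (blockStart g i)} hξ hj

omit hg in
theorem blockIndex_eq [Nonempty ι] {ξ : Ordinal.{u}} {i : ι} (h₁ : blockStart g i ≤ ξ)
    (h₂ : ξ < g i (blockStart g i)) : blockIndex g ξ = i := by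
  obtain ⟨h₁', h₂'⟩ := blockIndex_spec (g := g) ⟨i, h₂⟩
  rcases lt_trichotomy (blockIndex g ξ) i with h | h | h
  · exact absurd (h₂'.trans_le ((le_blockStart g h).trans h₁)) (lt_irrefl ξ)
  · exact h
  · exact absurd (h₂.trans_le ((le_blockStart g h).trans h₁')) (lt_irrefl ξ)

end BlockStart

theorem blockIndex_spec_coe {o : Ordinal.{u}} [Nonempty o.ToType]
    {g : o.ToType → Ordinal.{u} → Ordinal.{u}} (hg : ∀ j v, v < g j v) (t : o.ToType) :
    blockStart g (blockIndex g t) ≤ t ∧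
      (t : Ordinal) < g (blockIndex g t) (blockStart g (blockIndex g t)) :=
  blockIndex_spec ⟨t, (ToType.coe_le_of_strictMono (blockStart_strictMono hg) t).trans_lt (hg _ _)⟩

namespace BlockCode

open Ordinal.ToType

variable {A B : Type u} (len : A → Ordinal.{u})

theorem lt_add_one_add (v l : Ordinal) : v < v + 1 + l :=
  (Order.lt_add_one_iff.2 le_rfl).trans_le le_self_add

theorem add_one_add_lt_ord {κ : Cardinal} (hκ : ℵ₀ ≤ κ) {v l : Ordinal} (hv : v < κ.ord)
    (hl : l < κ.ord) : v + 1 + l < κ.ord :=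
  have h := isPrincipal_add_ord hκ
  h (h hv (one_lt_omega0.trans_le (omega0_le_ord.2 hκ))) hl

def readBlock (p : Σ a : A, ((len a).ToType → A)) (δ : Ordinal) : A :=
  if δ = 0 then p.1
  else if h : δ - 1 < len p.1 then p.2 (ToType.mk ⟨δ - 1, h⟩) else p.1

@[simp]
theorem readBlock_zero (p : Σ a : A, ((len a).ToType → A)) : readBlock len p 0 = p.1 := if_pos rfl

theorem readBlock_one_add (p : Σ a : A, ((len a).ToType → A)) {δ : Ordinal} (h : δ < len p.1) :
    readBlock len p (1 + δ) = p.2 (ToType.mk ⟨δ, h⟩) := by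
  have hne : (1 : Ordinal) + δ ≠ 0 := (zero_lt_one.trans_le le_self_add).ne'
  simp only [readBlock, if_neg hne, Ordinal.add_sub_cancel, dif_pos h]

theorem sigma_mk_eq {a : A} {f : (len a).ToType → A} {p : Σ a : A, ((len a).ToType → A)}
    (ha : a = p.1) (hf : ∀ δ (h : δ < len a), f (ToType.mk ⟨δ, h⟩) = readBlock len p (1 + δ)) :
    ⟨a, f⟩ = p := by
  obtain ⟨a, g⟩ := p
  subst ha
  refine congrArg (Sigma.mk a) (funext fun j => ?_)
  have hj := hf j j.toOrd.2
  rw [readBlock_one_add len ⟨a, g⟩ (δ := j) j.toOrd.2] at hj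
  simpa using hj

variable {κ : Cardinal.{u}} [Nonempty κ.ord.ToType] (e : B ≃ Σ a : A, ((len a).ToType → A))

/-- Block `j` of `concat y` is `e (y j)`; started at `v`, it ends here. -/
def concatEnd (y : κ.ord.ToType → B) (j : κ.ord.ToType) (v : Ordinal) : Ordinal :=
  v + 1 + len (e (y j)).1

/-- When `x` is parsed, the block starting at `v` has head `x v` and ends here. -/
def parseEnd (x : κ.ord.ToType → A) (_ : κ.ord.ToType) (v : Ordinal) : Ordinal :=
  v + 1 + len (x (ofOrd v))

def concat (y : κ.ord.ToType → B) (t : κ.ord.ToType) : A :=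
  let i := blockIndex (concatEnd len e y) t
  readBlock len (e (y i)) (t - blockStart (concatEnd len e y) i)

def parse (x : κ.ord.ToType → A) (i : κ.ord.ToType) : B :=
  let s := blockStart (parseEnd len x) i
  e.symm ⟨x (ofOrd s), fun j => x (ofOrd (s + 1 + j))⟩

theorem apply_parse (x : κ.ord.ToType → A) (i : κ.ord.ToType) :
    e (parse len e x i) = ⟨x (ofOrd (blockStart (parseEnd len x) i)),
      fun j => x (ofOrd (blockStart (parseEnd len x) i + 1 + j))⟩ :=
  e.apply_symm_apply _

variable (hκ : κ.IsRegular) (hlen : ∀ a, len a < κ.ord)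
include hκ hlen

omit [Nonempty κ.ord.ToType] in
theorem blockStart_concatEnd_lt (y : κ.ord.ToType → B) (i : κ.ord.ToType) :
    blockStart (concatEnd len e y) i < κ.ord :=
  blockStart_lt_ord _ hκ (fun i => by simpa using mk_Iio_lt i)
    (fun _ _ hv => add_one_add_lt_ord hκ.aleph0_le hv (hlen _)) i

theorem blockStart_parseEnd_lt (x : κ.ord.ToType → A) (i : κ.ord.ToType) :
    blockStart (parseEnd len x) i < κ.ord :=
  blockStart_lt_ord _ hκ (fun i => by simpa using mk_Iio_lt i)
    (fun _ _ hv => add_one_add_lt_ord hκ.aleph0_le hv (hlen _)) i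

omit hκ hlen in
theorem concat_eq_readBlock (y : κ.ord.ToType → B) {i t : κ.ord.ToType}
    (h₁ : blockStart (concatEnd len e y) i ≤ t)
    (h₂ : (t : Ordinal) < concatEnd len e y i (blockStart (concatEnd len e y) i)) :
    concat len e y t = readBlock len (e (y i)) (t - blockStart (concatEnd len e y) i) := by
  rw [concat, blockIndex_eq h₁ h₂]

theorem concat_ofOrd_add (y : κ.ord.ToType → B) (i : κ.ord.ToType) {δ : Ordinal}
    (hδ : δ < 1 + len (e (y i)).1) :
    concat len e y (ofOrd (blockStart (concatEnd len e y) i + δ)) = readBlock len (e (y i)) δ := by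
  set s := blockStart (concatEnd len e y) i
  have hlt : s + δ < concatEnd len e y i s := by
    rw [concatEnd, add_assoc]; exact (add_lt_add_iff_left s).2 hδ
  have hκ' : s + δ < κ.ord := hlt.trans (add_one_add_lt_ord hκ.aleph0_le
    (blockStart_concatEnd_lt len e hκ hlen y i) (hlen _))
  rw [concat_eq_readBlock len e y (i := i) (by simpa [coe_ofOrd hκ'] using le_self_add)
    (by simpa [coe_ofOrd hκ'] using hlt), coe_ofOrd hκ', Ordinal.add_sub_cancel]

omit [Nonempty κ.ord.ToType] hκ hlen in
theorem readBlock_apply_parse [Nonempty κ.ord.ToType] (x : κ.ord.ToType → A) (i : κ.ord.ToType)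
    {δ : Ordinal} (hδ : δ < 1 + len (x (ofOrd (blockStart (parseEnd len x) i)))) :
    readBlock len (e (parse len e x i)) δ = x (ofOrd (blockStart (parseEnd len x) i + δ)) := by
  rcases eq_or_ne δ 0 with rfl | hδ0
  · simp [apply_parse]
  obtain ⟨δ, rfl⟩ : ∃ δ', δ = 1 + δ' :=
    ⟨δ - 1, (Ordinal.add_sub_cancel_of_le (Order.one_le_iff_ne_zero.2 hδ0)).symm⟩
  rw [apply_parse, readBlock_one_add len _ ((add_lt_add_iff_left 1).1 hδ)]
  simp [add_assoc]

omit hκ hlen in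
theorem blockStart_concatEnd_parse (x : κ.ord.ToType → A) :
    blockStart (concatEnd len e (parse len e x)) = blockStart (parseEnd len x) :=
  funext fun _ =>
    (blockStart_congr (fun _ _ => by simp [concatEnd, parseEnd, apply_parse]) le_rfl).symm

theorem concat_ofOrd_blockStart (y : κ.ord.ToType → B) (i : κ.ord.ToType) :
    concat len e y (ofOrd (blockStart (concatEnd len e y) i)) = (e (y i)).1 := by
  simpa using concat_ofOrd_add len e hκ hlen y i (δ := 0) (by simpa using lt_add_one_add 0 _)

theorem blockStart_parseEnd_concat (y : κ.ord.ToType → B) :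
    blockStart (parseEnd len (concat len e y)) = blockStart (concatEnd len e y) :=
  funext fun _ => (blockStart_congr (fun j _ => by
    rw [parseEnd, concatEnd, concat_ofOrd_blockStart len e hκ hlen]) le_rfl).symm

theorem concat_parse (x : κ.ord.ToType → A) : concat len e (parse len e x) = x := by
  funext t
  obtain ⟨h₁, h₂⟩ := blockIndex_spec_coe (g := parseEnd len x) (fun _ v => lt_add_one_add v _) t
  set i := blockIndex (parseEnd len x) t
  set s := blockStart (parseEnd len x) i
  have hts : s + (t - s) = t := Ordinal.add_sub_cancel_of_le h₁
  have hδ : (t : Ordinal) - s < 1 + len (x (ofOrd s)) := by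
    rw [← add_lt_add_iff_left s, ← add_assoc, hts]; exact h₂
  calc concat len e (parse len e x) t
      = concat len e (parse len e x)
          (ofOrd (blockStart (concatEnd len e (parse len e x)) i + (t - s))) := by
        rw [blockStart_concatEnd_parse, hts, ofOrd_coe]
    _ = readBlock len (e (parse len e x i)) (t - s) :=
        concat_ofOrd_add len e hκ hlen _ i (by rwa [apply_parse])
    _ = x t := by rw [readBlock_apply_parse len e x i hδ, hts, ofOrd_coe]

theorem parse_concat (y : κ.ord.ToType → B) : parse len e (concat len e y) = y := by
  funext i
  apply e.injective
  rw [apply_parse, blockStart_parseEnd_concat len e hκ hlen]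
  set s := blockStart (concatEnd len e y) i
  have hhead : concat len e y (ofOrd s) = (e (y i)).1 := concat_ofOrd_blockStart len e hκ hlen y i
  refine sigma_mk_eq len hhead fun δ h => ?_
  rw [hhead] at h
  simpa [add_assoc] using concat_ofOrd_add len e hκ hlen y i ((add_lt_add_iff_left 1).2 h)

theorem parse_eq_of_eqOn (x x' : κ.ord.ToType → A) (b : κ.ord.ToType)
    (hx : ∀ t < ofOrd (blockStart (parseEnd len x) b), x' t = x t) {i : κ.ord.ToType}
    (hi : i < b) :
    parse len e x' i = parse len e x i := by
  have hS := blockStart_parseEnd_lt len hκ hlen x b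
  have hagree : ∀ v < blockStart (parseEnd len x) b, x' (ofOrd v) = x (ofOrd v) :=
    fun v hv => hx _ ((ofOrd_lt_ofOrd (hv.trans hS) hS).2 hv)
  have hmono := blockStart_strictMono (g := parseEnd len x) fun _ v => lt_add_one_add v _
  have hstart : blockStart (parseEnd len x) i = blockStart (parseEnd len x') i :=
    blockStart_congr (fun j hj => by rw [parseEnd, parseEnd, hagree _ (hmono (hj.trans hi))])
      le_rfl
  set s := blockStart (parseEnd len x) i
  have hblock : ∀ δ < 1 + len (x (ofOrd s)), x' (ofOrd (s + δ)) = x (ofOrd (s + δ)) := by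
    refine fun δ hδ => hagree _ (lt_of_lt_of_le ?_ (le_blockStart _ hi))
    rw [parseEnd, add_assoc]; exact (add_lt_add_iff_left s).2 hδ
  have hhead : x' (ofOrd s) = x (ofOrd s) := by
    simpa using hblock 0 (by simpa using lt_add_one_add 0 _)
  apply e.injective
  rw [apply_parse len e x', ← hstart]
  refine sigma_mk_eq len (by rw [apply_parse, hhead]) fun δ h => ?_
  rw [hhead] at h
  have hδ : 1 + δ < 1 + len (x (ofOrd s)) := (add_lt_add_iff_left 1).2 h
  simpa [add_assoc, readBlock_apply_parse len e x i hδ] using hblock _ hδ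

omit hκ hlen in
theorem concat_eq_of_eqOn (y y' : κ.ord.ToType → B) (b : κ.ord.ToType)
    (hy : ∀ i < b, y' i = y i) {t : κ.ord.ToType} (ht : t < b) :
    concat len e y' t = concat len e y t := by
  have hmono := blockStart_strictMono (g := concatEnd len e y) fun _ v => lt_add_one_add v _
  have hstart : ∀ j ≤ b, blockStart (concatEnd len e y) j = blockStart (concatEnd len e y') j :=
    fun j hj => blockStart_congr (fun k hk => by rw [concatEnd, concatEnd, hy k hk]) hj
  obtain ⟨h₁, h₂⟩ := blockIndex_spec_coe (g := concatEnd len e y) (fun _ v => lt_add_one_add v _) t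
  set i := blockIndex (concatEnd len e y) t
  have hib : i < b := lt_of_not_ge fun hbi => lt_irrefl (t : Ordinal) <|
    calc (t : Ordinal) < b := coe_lt_coe.2 ht
      _ ≤ blockStart (concatEnd len e y) b := coe_le_of_strictMono hmono b
      _ ≤ blockStart (concatEnd len e y) i := hmono.monotone hbi
      _ ≤ t := h₁
  rw [concat_eq_readBlock len e y h₁ h₂, concat_eq_readBlock len e y' (i := i)
    (by rwa [← hstart i hib.le]) (by rwa [← hstart i hib.le, concatEnd, hy i hib]),
    ← hstart i hib.le, hy i hib]

def parseEquiv : (κ.ord.ToType → A) ≃ (κ.ord.ToType → B) where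
  toFun := parse len e
  invFun := concat len e
  left_inv := concat_parse len e hκ hlen
  right_inv := parse_concat len e hκ hlen

end BlockCode

def BlockCode.homeomorph {κ : Cardinal.{0}} [Nonempty κ.ord.ToType] (hκ : κ.IsRegular)
    {A B : Type} (len : A → Ordinal.{0}) (hlen : ∀ a, len a < κ.ord)
    (e : B ≃ Σ a : A, ((len a).ToType → A)) : GSeq κ.ord.ToType A ≃ₜ GSeq κ.ord.ToType B :=
  GSeq.homeomorphOfEquiv (BlockCode.parseEquiv len e hκ hlen)
    (fun x b => ⟨_, fun x' hx _ hi => BlockCode.parse_eq_of_eqOn len e hκ hlen x x' b hx hi⟩)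
    (fun y b => ⟨b, fun y' hy _ ht => BlockCode.concat_eq_of_eqOn len e y y' b hy ht⟩)

theorem statement_13_general (κ lam : Cardinal) (hκ : κ.IsRegular)
    (hκlam : κ ≤ lam) :
    (lam ^< κ) ^< κ = lam ^< κ ∧
    Nonempty (GSeq κ.ord.ToType lam.ord.ToType ≃ₜ GSeq κ.ord.ToType (lam ^< κ).ord.ToType) := by
  have : Nonempty κ.ord.ToType := by simpa using hκ.pos.ne'
  obtain ⟨len, hlen, ⟨e⟩⟩ := exists_equiv_sigma_toType hκ hκlam
  exact ⟨powerlt_powerlt hκ hκlam, ⟨BlockCode.homeomorph hκ len hlen e⟩⟩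

/-- for infinite cardinals `κ ≤ λ` with `κ` regular and `λ' = λ^{<κ}`, we have
`(λ')^{<κ} = λ'` and `ᵏλ` is homeomorphic to `ᵏλ'` (both with the bounded topology). -/
theorem statement_13 (κ lam : Cardinal) (hκ : κ.IsRegular) (hlam : ℵ₀ ≤ lam)
    (hκlam : κ ≤ lam) :
    (lam ^< κ) ^< κ = lam ^< κ ∧
    Nonempty (GSeq κ.ord.ToType lam.ord.ToType ≃ₜ GSeq κ.ord.ToType (lam ^< κ).ord.ToType) :=
  statement_13_general κ lam hκ hκlam

end
end
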